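/- Lemma (risk surrogate bound): let K ≥ 2, let D = ((x_1,y_1),...,(x_N,y_N)) be a finite dataset with labels y_i ∈ {1,...,K}, let f : X × {1,...,K} → ℝ be any function, and let γ = (γ_1,...,γ_K) with all γ_k > 0. Define the empirical γ-margin risk R̂_D^γ(f) = (1/N) Σ_{i=1}^N Φ_{γ_{y_i}}(f(x_i,y_i) − max_{y'≠y_i} f(x_i,y')) and the empirical γ-margin cross-entropy risk R̂_D^{γ,ce}(f) = (1/N) Σ_{i=1}^N ln(1 + Σ_{y'≠y_i} exp((f(x_i,y') − f(x_i,y_i))/γ_{y_i})). Then R̂_D^γ(f) ≤ (1/ln 2) · R̂_D^{γ,ce}(f). -/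

import Mathlib

/-- The ramp function `Φ_γ(u) = min(1, max(0, 1 − u/γ))`. -/
noncomputable def ramp (γ u : ℝ) : ℝ := min 1 (max 0 (1 - u / γ))

theorem eraseUnivNonempty {K : ℕ} (hK : 2 ≤ K) (y : Fin K) :
    (Finset.univ.erase y).Nonempty := by
  rw [← Finset.card_pos, Finset.card_erase_of_mem (Finset.mem_univ y),
    Finset.card_univ, Fintype.card_fin]
  omega

/-- `max_{y' ≠ y} z_{y'}`, the largest score among the classes other than `y`. -/
noncomputable def maxOther {K : ℕ} (hK : 2 ≤ K) (z : Fin K → ℝ) (y : Fin K) : ℝ :=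
  (Finset.univ.erase y).sup' (eraseUnivNonempty hK y) z

/-!
Pointwise, with `t = γ_f(x,y)/γ_y`, the ramp loss is at most `1`, vanishes for `t ≥ 1`, and is
`1 - t` in between, while `log (1 + e^{-t})` is at least `log 2` for `t ≤ 0`, is positive, and
is at least `log 2 - t/2` by AM-GM, which is `≥ (1 - t) log 2` for `t ≥ 0` since `log 2 > 1/2`.
The cross-entropy term dominates `log (1 + e^{-t})` because the runner-up class contributes
exactly `e^{-t}` to its sum. Averaging over the dataset gives the bound.
-/

open Real Finset

lemma Finset.apply_sup'_le_sum {ι α M : Type*} [LinearOrder α] [AddCommMonoid M] [Preorder M]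
    [AddLeftMono M] {s : Finset ι} (hs : s.Nonempty) (z : ι → α) {g : α → M}
    (hg : ∀ a, 0 ≤ g a) : g (s.sup' hs z) ≤ ∑ i ∈ s, g (z i) := by
  obtain ⟨i, hi, hsup⟩ := s.exists_mem_eq_sup' hs z
  rw [hsup]
  exact single_le_sum (fun j _ => hg (z j)) hi

lemma Real.log_two_sub_half_le_log_one_add_exp_neg (t : ℝ) :
    log 2 - t / 2 ≤ log (1 + exp (-t)) := by
  have hsq : exp (-t / 2) ^ 2 = exp (-t) := by rw [← exp_nat_mul]; ring_nf
  have amgm : 2 * exp (-t / 2) ≤ 1 + exp (-t) := by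
    simpa [hsq] using two_mul_le_add_sq 1 (exp (-t / 2))
  calc log 2 - t / 2 = log (2 * exp (-t / 2)) := by
        rw [log_mul two_ne_zero (exp_ne_zero _), log_exp]; ring
    _ ≤ log (1 + exp (-t)) := log_le_log (by positivity) amgm

lemma ramp_mul_log_two_le_log_one_add_exp_neg (γ u : ℝ) :
    ramp γ u * log 2 ≤ log (1 + exp (-(u / γ))) := by
  set t := u / γ
  have hlog2 : 1 / 2 < log 2 := by linarith [log_two_gt_d9]
  have hce_nonneg : 0 ≤ log (1 + exp (-t)) := log_nonneg (by linarith [exp_pos (-t)])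
  have hramp_le_one : ramp γ u ≤ 1 := min_le_left _ _
  rcases le_or_gt t 0 with ht | ht
  · have hce : log 2 ≤ log (1 + exp (-t)) :=
      log_le_log two_pos (by linarith [one_le_exp (neg_nonneg.mpr ht)])
    nlinarith
  rcases le_or_gt 1 t with ht1 | ht1
  · have hramp : ramp γ u = 0 := by
      simp only [ramp, max_eq_left (by linarith : 1 - t ≤ 0), min_eq_right zero_le_one, t]
    rw [hramp, zero_mul]
    exact hce_nonneg
  · have hramp : ramp γ u = 1 - t := by
      simp only [ramp, max_eq_right (by linarith : 0 ≤ 1 - t),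
        min_eq_right (by linarith : 1 - t ≤ 1), t]
    rw [hramp]
    nlinarith [log_two_sub_half_le_log_one_add_exp_neg t]

lemma ramp_margin_le_log_one_add_sum_exp_div_log_two {K : ℕ} (hK : 2 ≤ K) (z : Fin K → ℝ)
    (y : Fin K) (γ : ℝ) :
    ramp γ (z y - maxOther hK z y) ≤
      log (1 + ∑ y' ∈ univ.erase y, exp ((z y' - z y) / γ)) / log 2 := by
  have runner_up : exp (-((z y - maxOther hK z y) / γ)) ≤
      ∑ y' ∈ univ.erase y, exp ((z y' - z y) / γ) := by
    rw [← neg_div, neg_sub]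
    exact (univ.erase y).apply_sup'_le_sum (eraseUnivNonempty hK y) z
      (g := fun a => exp ((a - z y) / γ)) fun a => (exp_pos _).le
  rw [le_div_iff₀ (log_pos one_lt_two)]
  exact (ramp_mul_log_two_le_log_one_add_exp_neg γ _).trans
    (log_le_log (by positivity) (by linarith))

theorem empirical_margin_risk_le_inv_log_two_mul_ce_risk_general
    {X : Type*} (K N : ℕ) (hK : 2 ≤ K)
    (x : Fin N → X) (ylab : Fin N → Fin K)
    (f : X → Fin K → ℝ) (γ : Fin K → ℝ) :
    (1 / (N : ℝ)) *
        ∑ i, ramp (γ (ylab i)) (f (x i) (ylab i) - maxOther hK (f (x i)) (ylab i)) ≤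
      (1 / Real.log 2) *
        ((1 / (N : ℝ)) *
          ∑ i, Real.log (1 + ∑ y' ∈ Finset.univ.erase (ylab i),
            Real.exp ((f (x i) y' - f (x i) (ylab i)) / γ (ylab i)))) := by
  calc (1 / (N : ℝ)) *
        ∑ i, ramp (γ (ylab i)) (f (x i) (ylab i) - maxOther hK (f (x i)) (ylab i))
      ≤ (1 / (N : ℝ)) * ∑ i, log (1 + ∑ y' ∈ univ.erase (ylab i),
          exp ((f (x i) y' - f (x i) (ylab i)) / γ (ylab i))) / log 2 := by
        gcongr with i
        exact ramp_margin_le_log_one_add_sum_exp_div_log_two hK (f (x i)) (ylab i) _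
    _ = _ := by rw [← sum_div]; ring

/-- **Risk surrogate bound.** For `K ≥ 2`, a finite dataset `((x_i, y_i))_{i=1}^N`,
any function `f : X × {1,…,K} → ℝ` and per-class margins `γ_k > 0`, the empirical
`γ`-margin risk is bounded by `(1/ln 2)` times the empirical `γ`-margin
cross-entropy risk:
`R̂_D^γ(f) ≤ (1/ln 2) · R̂_D^{γ,ce}(f)`. -/
theorem empirical_margin_risk_le_inv_log_two_mul_ce_risk
    {X : Type*} (K N : ℕ) (hK : 2 ≤ K) (hN : 0 < N)
    (x : Fin N → X) (ylab : Fin N → Fin K)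
    (f : X → Fin K → ℝ) (γ : Fin K → ℝ) (hγ : ∀ k, 0 < γ k) :
    (1 / (N : ℝ)) *
        ∑ i, ramp (γ (ylab i)) (f (x i) (ylab i) - maxOther hK (f (x i)) (ylab i)) ≤
      (1 / Real.log 2) *
        ((1 / (N : ℝ)) *
          ∑ i, Real.log (1 + ∑ y' ∈ Finset.univ.erase (ylab i),
            Real.exp ((f (x i) y' - f (x i) (ylab i)) / γ (ylab i)))) :=
  empirical_margin_risk_le_inv_log_two_mul_ce_risk_general K N hK x ylab f γ
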